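/- arXiv:1507.07677 — 5 statements merged into one kernel-verified Lean document; each statement's English description precedes it below -/
import Mathlib

section
/- Let G be the concurrent-move game tree associated with a Knapsack instance with unit-items (w_1,…,w_N; v_1,…,v_N; W), i.e., at least W items satisfy w_i = v_i = 1. If a leader behavioral strategy σ1 that plays a pure action in every subgame I_i is optimal (achieves the leader's Stackelberg value in behavioral strategies) and its Stackelberg payoff is strictly positive, then σ1 plays the uniform distribution over l_1,…,l_N at the root. -/
/-!
Let `τ` be a leader-favourable best response to `σ` and `S` the set of subgames where `σ`
plays `⊕`. The leader's payoff is positive, so the follower plays `f_0` with positive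
probability. Hence no root deviation `f_k` pays off,
`N q_k M + ∑_{i ∈ S} N q_i w_i ≤ W + M`, and the follower answers `R` in every reached
`⊖`-subgame, so `σ` earns at most `∑_{i ∈ S} N q_i v_i`.

If the largest root probability is `(1 + δ)/N` with `δ > 0`, the deviation constraint gives
`δ M ≤ W`; as `M > W N v_i`, this forces `δ N v_i < 1`, all `q_i` close to `1/N`, the weight
of `S` below `W`, and `∑_{i ∈ S} N q_i v_i < ∑_{i ∈ S} v_i + 1`. But then a unit item
outside `S` fits into the knapsack `S`, and the uniform strategy packing both earns
`∑_{i ∈ S} v_i + 1`, contradicting optimality. So `q_i ≤ 1/N` for all `i`, whence equality.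
-/
open scoped BigOperators

noncomputable section

namespace KnapsackGame

/-- A behavioral strategy of the leader in the concurrent-move game tree associated with a
Knapsack instance with `N` items: `q i` is the probability of root action `l_i`, and
`r i` is the probability of action `⊕` in the subgame `I_i`. -/
structure LStrat (N : ℕ) where
  q : Fin N → ℝ
  r : Fin N → ℝ

/-- A behavioral strategy of the follower: `g 0` is the probability of root action `f_0`,
`g k.succ` the probability of `f_{k+1}`, and `s i` the probability of `L` in subgame `I_i`. -/
structure FStrat (N : ℕ) where
  g : Fin (N + 1) → ℝ
  s : Fin N → ℝ

/-- Validity of a leader behavioral strategy. -/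
def LValid {N : ℕ} (σ : LStrat N) : Prop :=
  (∀ i, 0 ≤ σ.q i) ∧ (∑ i, σ.q i) = 1 ∧ ∀ i, 0 ≤ σ.r i ∧ σ.r i ≤ 1

/-- Validity of a follower behavioral strategy. -/
def FValid {N : ℕ} (τ : FStrat N) : Prop :=
  (∀ k, 0 ≤ τ.g k) ∧ (∑ k, τ.g k) = 1 ∧ ∀ i, 0 ≤ τ.s i ∧ τ.s i ≤ 1

/-- The leader's expected utility in the subgame `I_i`:
`(⊕,L) ↦ N·v i`, `(⊕,R) ↦ 0`, `(⊖,L) ↦ N·v i`, `(⊖,R) ↦ 0`. -/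
def subEU1 (N : ℕ) (v : Fin N → ℕ) (σ : LStrat N) (τ : FStrat N) (i : Fin N) : ℝ :=
  σ.r i * (τ.s i * ((N : ℝ) * (v i : ℝ)) + (1 - τ.s i) * 0) +
    (1 - σ.r i) * (τ.s i * ((N : ℝ) * (v i : ℝ)) + (1 - τ.s i) * 0)

/-- The follower's expected utility in the subgame `I_i`:
`(⊕,L) ↦ -N·w i`, `(⊕,R) ↦ -N·w i`, `(⊖,L) ↦ -N·w i`, `(⊖,R) ↦ 0`. -/
def subEU2 (N : ℕ) (w : Fin N → ℕ) (σ : LStrat N) (τ : FStrat N) (i : Fin N) : ℝ :=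
  σ.r i * (τ.s i * (-((N : ℝ) * (w i : ℝ))) + (1 - τ.s i) * (-((N : ℝ) * (w i : ℝ)))) +
    (1 - σ.r i) * (τ.s i * (-((N : ℝ) * (w i : ℝ))) + (1 - τ.s i) * 0)

/-- The leader's expected utility in the whole game: terminal payoffs after `f_k`, `k ≥ 1`,
give the leader `0`. -/
def EU1 (N : ℕ) (v : Fin N → ℕ) (σ : LStrat N) (τ : FStrat N) : ℝ :=
  τ.g 0 * (∑ i, σ.q i * subEU1 N v σ τ i) +
    ∑ k : Fin N, τ.g k.succ * (∑ i, σ.q i * (0 : ℝ))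

/-- The follower's expected utility in the whole game: after root actions `(l_i, f_{k+1})`
the follower gets `N·M − W − M` if `i = k` and `−W − M` otherwise. -/
def EU2 (N : ℕ) (w : Fin N → ℕ) (W M : ℕ) (σ : LStrat N) (τ : FStrat N) : ℝ :=
  τ.g 0 * (∑ i, σ.q i * subEU2 N w σ τ i) +
    ∑ k : Fin N, τ.g k.succ *
      (∑ i, σ.q i *
        (if i = k then (N : ℝ) * (M : ℝ) - (W : ℝ) - (M : ℝ) else -(W : ℝ) - (M : ℝ)))

/-- `τ` is a best response of the follower to the leader strategy `σ`. -/
def BestResponse (N : ℕ) (w : Fin N → ℕ) (W M : ℕ) (σ : LStrat N) (τ : FStrat N) : Prop :=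
  FValid τ ∧ ∀ τ' : FStrat N, FValid τ' → EU2 N w W M σ τ' ≤ EU2 N w W M σ τ

section Payoffs

variable {N : ℕ}

lemma LValid.pos {σ : LStrat N} (hσ : LValid σ) : 0 < N := by
  refine Nat.pos_of_ne_zero fun hN => ?_
  subst hN
  simpa using hσ.2.1

lemma EU1_eq (v : Fin N → ℕ) (σ : LStrat N) (τ : FStrat N) :
    EU1 N v σ τ = τ.g 0 * ∑ i, σ.q i * (τ.s i * (N * v i)) := by
  simp only [EU1, subEU1, mul_zero, add_zero, Finset.sum_const_zero]
  congr 1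
  exact Finset.sum_congr rfl fun i _ => by ring

lemma subEU2_eq (w : Fin N → ℕ) (σ : LStrat N) (τ : FStrat N) (i : Fin N) :
    subEU2 N w σ τ i = -(N * w i * (σ.r i + (1 - σ.r i) * τ.s i)) := by
  unfold subEU2; ring

lemma EU2_eq (w : Fin N → ℕ) (W M : ℕ) {σ : LStrat N} (hq : ∑ i, σ.q i = 1)
    (τ : FStrat N) :
    EU2 N w W M σ τ = τ.g 0 * ∑ i, σ.q i * subEU2 N w σ τ i
      + ∑ k : Fin N, τ.g k.succ * (σ.q k * (N * M) - W - M) := by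
  unfold EU2
  congr 1
  refine Finset.sum_congr rfl fun k _ => congrArg _ ?_
  have hsplit : ∀ i, σ.q i * (if i = k then (N : ℝ) * M - W - M else -(W : ℝ) - M)
      = σ.q i * (-(W : ℝ) - M) + if i = k then σ.q i * (N * M) else 0 := by
    intro i; split <;> ring
  simp only [hsplit, Finset.sum_add_distrib, Finset.sum_ite_eq', Finset.mem_univ, if_true,
    ← Finset.sum_mul, hq]
  ring

end Payoffs

section ConvexCombination

variable {N : ℕ} {g : Fin (N + 1) → ℝ}

lemma convex_combination_le (hg0 : ∀ k, 0 ≤ g k) (hg1 : ∑ k, g k = 1) {a c : ℝ}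
    {d : Fin N → ℝ} (ha : a ≤ c) (hd : ∀ k, d k ≤ c) :
    g 0 * a + ∑ k : Fin N, g k.succ * d k ≤ c := by
  rw [Fin.sum_univ_succ] at hg1
  calc g 0 * a + ∑ k : Fin N, g k.succ * d k ≤ g 0 * c + ∑ k : Fin N, g k.succ * c :=
        add_le_add (mul_le_mul_of_nonneg_left ha (hg0 0))
          (Finset.sum_le_sum fun k _ => mul_le_mul_of_nonneg_left (hd k) (hg0 k.succ))
    _ = c := by rw [← Finset.sum_mul, ← add_mul, hg1, one_mul]

lemma le_of_convex_combination (hg0 : ∀ k, 0 ≤ g k) (hg1 : ∑ k, g k = 1) (hpos : 0 < g 0)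
    {a E : ℝ} {d : Fin N → ℝ} (hE : E = g 0 * a + ∑ k : Fin N, g k.succ * d k)
    (hd : ∀ k, d k ≤ E) : E ≤ a := by
  rw [Fin.sum_univ_succ] at hg1
  have hrest : ∑ k : Fin N, g k.succ * d k ≤ (1 - g 0) * E := by
    rw [← hg1, add_sub_cancel_left, Finset.sum_mul]
    exact Finset.sum_le_sum fun k _ => mul_le_mul_of_nonneg_left (hd k) (hg0 k.succ)
  nlinarith

end ConvexCombination

section Follower

variable {N : ℕ} (w : Fin N → ℕ) (W M : ℕ)

def FStrat.pureRoot (k : Fin (N + 1)) (s : Fin N → ℝ) : FStrat N := ⟨Pi.single k 1, s⟩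

lemma FValid.pureRoot {k : Fin (N + 1)} {s : Fin N → ℝ} (hs : ∀ i, 0 ≤ s i ∧ s i ≤ 1) :
    FValid (FStrat.pureRoot k s) := by
  refine ⟨fun j => ?_, by simp [FStrat.pureRoot], hs⟩
  by_cases h : j = k <;> simp [FStrat.pureRoot, h]

lemma EU2_pureRoot_succ {σ : LStrat N} (hq : ∑ i, σ.q i = 1) (j : Fin N) (s : Fin N → ℝ) :
    EU2 N w W M σ (FStrat.pureRoot j.succ s) = σ.q j * (N * M) - W - M := by
  simp [EU2_eq w W M hq, FStrat.pureRoot, Pi.single_apply, (Fin.succ_ne_zero j).symm]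

variable {w W M} {σ : LStrat N} {τ : FStrat N}

lemma FValid.g_le_one (hτ : FValid τ) (k : Fin (N + 1)) : τ.g k ≤ 1 :=
  hτ.2.1 ▸ Finset.single_le_sum (fun j _ => hτ.1 j) (Finset.mem_univ k)

lemma BestResponse.root_deviation_le (hτ : BestResponse N w W M σ τ) (hq : ∑ i, σ.q i = 1)
    (j : Fin N) : σ.q j * (N * M) - W - M ≤ EU2 N w W M σ τ := by
  rw [← EU2_pureRoot_succ w W M hq j τ.s]
  exact hτ.2 _ (FValid.pureRoot hτ.1.2.2)

lemma BestResponse.root_deviation_le_subgames (hτ : BestResponse N w W M σ τ)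
    (hq : ∑ i, σ.q i = 1) (hg : 0 < τ.g 0) (j : Fin N) :
    σ.q j * (N * M) - W - M ≤ ∑ i, σ.q i * subEU2 N w σ τ i :=
  (hτ.root_deviation_le hq j).trans <|
    le_of_convex_combination hτ.1.1 hτ.1.2.1 hg (EU2_eq w W M hq τ) (hτ.root_deviation_le hq)

lemma EU2_update_s_sub (hq : ∑ i, σ.q i = 1) (i : Fin N) (t : ℝ) :
    EU2 N w W M σ ⟨τ.g, Function.update τ.s i t⟩ - EU2 N w W M σ τ
      = τ.g 0 * (σ.q i * (N * w i * (1 - σ.r i) * (τ.s i - t))) := by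
  rw [EU2_eq w W M hq, EU2_eq w W M hq, add_sub_add_right_eq_sub, ← mul_sub,
    ← Finset.sum_sub_distrib, Finset.sum_eq_single i]
  · simp only [subEU2_eq, Function.update_self]; ring
  · intro j _ hj
    simp [subEU2_eq, Function.update_of_ne hj]
  · simp

lemma BestResponse.q_mul_s_eq_zero (hτ : BestResponse N w W M σ τ) (hσ : LValid σ)
    (hw : ∀ i, 0 < w i) (hg : 0 < τ.g 0) {i : Fin N} (hri : σ.r i = 0) :
    σ.q i * τ.s i = 0 := by
  have hvalid : FValid ⟨τ.g, Function.update τ.s i 0⟩ := by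
    refine ⟨hτ.1.1, hτ.1.2.1, fun j => ?_⟩
    by_cases hj : j = i
    · subst hj; simp
    · simpa [Function.update_of_ne hj] using hτ.1.2.2 j
  have hle := sub_nonpos.2 (hτ.2 _ hvalid)
  rw [EU2_update_s_sub hσ.2.1, hri] at hle
  have hNw : (0 : ℝ) < N * w i := by
    have := hσ.pos; have := hw i; positivity
  have hqs : 0 ≤ σ.q i * τ.s i := mul_nonneg (hσ.1 i) (hτ.1.2.2 i).1
  nlinarith [mul_pos hg hNw]

end Follower

section Leader

variable {N : ℕ} {w v : Fin N → ℕ} {W M : ℕ}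

def LStrat.uniformOn (T : Finset (Fin N)) : LStrat N :=
  ⟨fun _ => 1 / N, fun i => if i ∈ T then 1 else 0⟩

lemma LValid.uniformOn (hN : 0 < N) (T : Finset (Fin N)) : LValid (LStrat.uniformOn T) := by
  refine ⟨fun _ => by simp only [LStrat.uniformOn]; positivity, ?_, fun i => ?_⟩
  · simp [LStrat.uniformOn, (Nat.cast_pos.2 hN).ne']
  · by_cases hi : i ∈ T <;> simp [LStrat.uniformOn, hi]

lemma q_mul_subEU2_uniformOn (hN : 0 < N) (T : Finset (Fin N)) (τ : FStrat N) (i : Fin N) :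
    (LStrat.uniformOn T).q i * subEU2 N w (LStrat.uniformOn T) τ i
      = -(if i ∈ T then (w i : ℝ) else w i * τ.s i) := by
  have hN' : (N : ℝ) ≠ 0 := (Nat.cast_pos.2 hN).ne'
  rw [subEU2_eq]
  by_cases hi : i ∈ T <;> simp [LStrat.uniformOn, hi] <;> field_simp

lemma EU2_uniformOn_pureRoot_zero (hN : 0 < N) (T : Finset (Fin N)) :
    EU2 N w W M (LStrat.uniformOn T) (FStrat.pureRoot 0 (LStrat.uniformOn T).r)
      = -∑ i ∈ T, (w i : ℝ) := by
  rw [EU2_eq w W M (LValid.uniformOn hN T).2.1, ← Finset.sum_ite_mem_eq T,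
    ← Finset.sum_neg_distrib]
  simp only [FStrat.pureRoot, Pi.single_eq_same, one_mul, Pi.single_apply, Fin.succ_ne_zero,
    if_false, zero_mul, Finset.sum_const_zero, add_zero]
  refine Finset.sum_congr rfl fun i _ => ?_
  rw [q_mul_subEU2_uniformOn hN]
  by_cases hi : i ∈ T <;> simp [LStrat.uniformOn, hi]

lemma bestResponse_uniformOn (hN : 0 < N) {T : Finset (Fin N)} (hT : ∑ i ∈ T, w i ≤ W) :
    BestResponse N w W M (LStrat.uniformOn T)
      (FStrat.pureRoot 0 (LStrat.uniformOn T).r) := by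
  refine ⟨FValid.pureRoot (LValid.uniformOn hN T).2.2, fun τ hτ => ?_⟩
  rw [EU2_uniformOn_pureRoot_zero hN, EU2_eq w W M (LValid.uniformOn hN T).2.1]
  refine convex_combination_le hτ.1 hτ.2.1 ?_ fun k => ?_
  · rw [← Finset.sum_ite_mem_eq T, ← Finset.sum_neg_distrib]
    refine Finset.sum_le_sum fun i _ => ?_
    rw [q_mul_subEU2_uniformOn hN, neg_le_neg_iff]
    have := (hτ.2.2 i).1
    split_ifs
    · exact le_rfl
    · positivity
  · have hTR : ∑ i ∈ T, (w i : ℝ) ≤ W := by exact_mod_cast hT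
    simp only [LStrat.uniformOn]
    field_simp
    linarith

lemma EU1_uniformOn_pureRoot_zero (hN : 0 < N) (T : Finset (Fin N)) :
    EU1 N v (LStrat.uniformOn T) (FStrat.pureRoot 0 (LStrat.uniformOn T).r)
      = ∑ i ∈ T, (v i : ℝ) := by
  have hN' : (N : ℝ) ≠ 0 := (Nat.cast_pos.2 hN).ne'
  rw [EU1_eq, ← Finset.sum_ite_mem_eq T]
  simp only [FStrat.pureRoot, Pi.single_eq_same, one_mul]
  refine Finset.sum_congr rfl fun i _ => ?_
  by_cases hi : i ∈ T <;> simp [LStrat.uniformOn, hi, hN']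

end Leader

section PureLeader

variable {N W M : ℕ} {w v : Fin N → ℕ} {σ : LStrat N} {τ : FStrat N}

def LStrat.plusSet (σ : LStrat N) : Finset (Fin N) := Finset.univ.filter (σ.r · = 1)

lemma sum_mul_r_eq_sum_plusSet (hpure : ∀ i, σ.r i = 0 ∨ σ.r i = 1) (f : Fin N → ℝ) :
    ∑ i, f i * σ.r i = ∑ i ∈ σ.plusSet, f i := by
  rw [LStrat.plusSet, Finset.sum_filter]
  refine Finset.sum_congr rfl fun i _ => ?_
  rcases hpure i with h | h <;> simp [h]

lemma sum_q_mul_subEU2_le (hσ : LValid σ) (hs : ∀ i, 0 ≤ τ.s i) :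
    ∑ i, σ.q i * subEU2 N w σ τ i ≤ -∑ i, σ.q i * (N * w i) * σ.r i := by
  rw [← Finset.sum_neg_distrib]
  refine Finset.sum_le_sum fun i _ => ?_
  have hqNw : 0 ≤ σ.q i * (N * w i) := mul_nonneg (hσ.1 i) (by positivity)
  have hrs : 0 ≤ (1 - σ.r i) * τ.s i := mul_nonneg (sub_nonneg.2 (hσ.2.2 i).2) (hs i)
  rw [subEU2_eq]
  nlinarith [mul_nonneg hqNw hrs]

lemma BestResponse.root_deviation_add_weight_plusSet_le (hτ : BestResponse N w W M σ τ)
    (hσ : LValid σ) (hpure : ∀ i, σ.r i = 0 ∨ σ.r i = 1) (hg : 0 < τ.g 0) (j : Fin N) :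
    σ.q j * (N * M) + ∑ i ∈ σ.plusSet, σ.q i * (N * w i) ≤ W + M := by
  have hdev := hτ.root_deviation_le_subgames hσ.2.1 hg j
  have hsub := sum_q_mul_subEU2_le (w := w) hσ fun i => (hτ.1.2.2 i).1
  rw [sum_mul_r_eq_sum_plusSet hpure] at hsub
  linarith

lemma BestResponse.EU1_le_sum_plusSet (hτ : BestResponse N w W M σ τ) (hσ : LValid σ)
    (hpure : ∀ i, σ.r i = 0 ∨ σ.r i = 1) (hw : ∀ i, 0 < w i) (hg : 0 < τ.g 0) :
    EU1 N v σ τ ≤ ∑ i ∈ σ.plusSet, σ.q i * (N * v i) := by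
  have hterm : ∀ i, σ.q i * (τ.s i * (N * v i)) ≤ σ.q i * (N * v i) * σ.r i := by
    intro i
    rcases hpure i with h | h
    · rw [h, mul_zero, ← mul_assoc, hτ.q_mul_s_eq_zero hσ hw hg h, zero_mul]
    · rw [h, mul_one]
      exact mul_le_mul_of_nonneg_left
        (mul_le_of_le_one_left (by positivity) (hτ.1.2.2 i).2) (hσ.1 i)
  have hnonneg : 0 ≤ ∑ i, σ.q i * (τ.s i * (N * v i)) :=
    Finset.sum_nonneg fun i _ => mul_nonneg (hσ.1 i) (mul_nonneg (hτ.1.2.2 i).1 (by positivity))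
  calc EU1 N v σ τ ≤ ∑ i, σ.q i * (τ.s i * (N * v i)) := by
        rw [EU1_eq]; exact mul_le_of_le_one_left hnonneg (hτ.1.g_le_one 0)
    _ ≤ ∑ i, σ.q i * (N * v i) * σ.r i := Finset.sum_le_sum fun i _ => hterm i
    _ = ∑ i ∈ σ.plusSet, σ.q i * (N * v i) := sum_mul_r_eq_sum_plusSet hpure _

end PureLeader

lemma exists_mem_notMem_of_sum_lt_card {ι : Type*} {U S : Finset ι} {w : ι → ℕ}
    (hw : ∀ i ∈ U, 0 < w i) (h : ∑ i ∈ S, w i < U.card) : ∃ u ∈ U, u ∉ S := by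
  by_contra! hsub
  have hcard : U.card ≤ ∑ i ∈ U, w i := by
    simpa using Finset.card_nsmul_le_sum U w 1 hw
  exact (hcard.trans (Finset.sum_le_sum_of_subset hsub)).not_gt h

section RootDistribution

variable {N : ℕ} {q : Fin N → ℝ}

lemma one_sub_mul_le_of_forall_le (hq : ∑ j, q j = 1) {c : ℝ} (hc : ∀ j, q j ≤ c)
    (i : Fin N) : 1 - (N - 1) * c ≤ q i := by
  have hrest := Finset.sum_le_card_nsmul (Finset.univ.erase i) q c fun j _ => hc j
  rw [Finset.sum_erase_eq_sub (Finset.mem_univ i), hq, Finset.card_erase_of_mem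
    (Finset.mem_univ i), Finset.card_univ, Fintype.card_fin, nsmul_eq_mul,
    Nat.cast_pred i.pos] at hrest
  linarith

variable {W M : ℕ} {w v : Fin N → ℕ} {S : Finset (Fin N)} {δ : ℝ}

lemma sum_weight_lt_of_root_excess (hM : ∀ i, W * N * v i < M) (hv : ∀ i, 0 < v i)
    (hq : ∑ j, q j = 1) {k : Fin N} (hk : ∀ j, q j ≤ q k) (hδk : δ = N * q k - 1)
    (hδpos : 0 < δ) (hδN : δ * N < 1)
    (hδ : δ * M + ∑ i ∈ S, q i * (N * w i) ≤ W) : ∑ i ∈ S, w i < W := by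
  have hN : (0 : ℝ) < N := Nat.cast_pos.2 k.pos
  set c := 1 - (N - 1) * δ
  have hc : 0 ≤ c := by nlinarith
  have hcq : ∀ i, c ≤ N * q i := by
    intro i
    have := one_sub_mul_le_of_forall_le hq hk i
    nlinarith
  have hcS : c * ∑ i ∈ S, (w i : ℝ) ≤ ∑ i ∈ S, q i * (N * w i) := by
    rw [Finset.mul_sum]
    exact Finset.sum_le_sum fun i _ => by nlinarith [hcq i, Nat.cast_nonneg (α := ℝ) (w i)]
  have hMW : (W : ℝ) * N < M := by
    have h := hM k
    have h1 : W * N ≤ W * N * v k := Nat.le_mul_of_pos_right _ (hv k)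
    exact_mod_cast h1.trans_lt h
  by_contra! hW
  have hWR : (W : ℝ) ≤ ∑ i ∈ S, (w i : ℝ) := by exact_mod_cast hW
  nlinarith [mul_le_mul_of_nonneg_left hWR hc]

lemma sum_mul_lt_add_one (hN : 0 < N) (hδ : 0 ≤ δ) (hq : ∀ i, N * q i ≤ 1 + δ)
    (hδv : ∀ i, δ * (N * v i) < 1) :
    ∑ i ∈ S, q i * (N * v i) < ∑ i ∈ S, (v i : ℝ) + 1 := by
  have hNR : (0 : ℝ) < N := Nat.cast_pos.2 hN
  have htotal : δ * ∑ i, (v i : ℝ) < 1 := by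
    have : ∑ i, δ * (N * v i) < ∑ _i : Fin N, (1 : ℝ) :=
      Finset.sum_lt_sum_of_nonempty ⟨⟨0, hN⟩, Finset.mem_univ _⟩ fun i _ => hδv i
    rw [← Finset.mul_sum, ← Finset.mul_sum] at this
    simp only [Finset.sum_const, Finset.card_univ, Fintype.card_fin, nsmul_eq_mul,
      mul_one] at this
    nlinarith
  have hS : δ * ∑ i ∈ S, (v i : ℝ) ≤ δ * ∑ i, (v i : ℝ) :=
    mul_le_mul_of_nonneg_left (Finset.sum_le_sum_of_subset_of_nonneg (Finset.subset_univ S)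
      fun _ _ _ => by positivity) hδ
  calc ∑ i ∈ S, q i * (N * v i) ≤ ∑ i ∈ S, (1 + δ) * v i :=
        Finset.sum_le_sum fun i _ => by nlinarith [hq i, Nat.cast_nonneg (α := ℝ) (v i)]
    _ = ∑ i ∈ S, (v i : ℝ) + δ * ∑ i ∈ S, (v i : ℝ) := by
        rw [← Finset.mul_sum, add_mul, one_mul]
    _ < ∑ i ∈ S, (v i : ℝ) + 1 := by linarith

lemma root_prob_le_one_div {x : ℝ} (hw : ∀ i, 0 < w i) (hv : ∀ i, 0 < v i)
    (hunit : W ≤ (Finset.univ.filter fun i => w i = 1 ∧ v i = 1).card)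
    (hM : ∀ i, W * N * v i < M) (hq0 : ∀ i, 0 ≤ q i) (hq : ∑ j, q j = 1)
    (hdev : ∀ j, q j * (N * M) + ∑ i ∈ S, q i * (N * w i) ≤ W + M)
    (hupper : x ≤ ∑ i ∈ S, q i * (N * v i))
    (hlower : ∀ T : Finset (Fin N), ∑ i ∈ T, w i ≤ W → ∑ i ∈ T, (v i : ℝ) ≤ x)
    (i : Fin N) : q i ≤ 1 / N := by
  have hN : (0 : ℝ) < N := Nat.cast_pos.2 i.pos
  obtain ⟨k, -, hk⟩ := Finset.exists_max_image Finset.univ q ⟨i, Finset.mem_univ i⟩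
  replace hk : ∀ j, q j ≤ q k := fun j => hk j (Finset.mem_univ j)
  refine (hk i).trans (le_of_not_gt fun hqk => ?_)
  set δ := N * q k - 1 with hδk
  have hδpos : 0 < δ := by rw [div_lt_iff₀' hN] at hqk; linarith
  have hQ : 0 ≤ ∑ i ∈ S, q i * (N * w i) :=
    Finset.sum_nonneg fun i _ => mul_nonneg (hq0 i) (by positivity)
  have hδ : δ * M + ∑ i ∈ S, q i * (N * w i) ≤ W := by linarith [hdev k]
  have hδv : ∀ j, δ * (N * v j) < 1 := by
    intro j
    have hMj : (W : ℝ) * N * v j < M := by exact_mod_cast hM j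
    have hWNv : (0 : ℝ) ≤ W * N * v j := by positivity
    have hW : (0 : ℝ) < W := by nlinarith [mul_pos hδpos (hWNv.trans_lt hMj)]
    refine (mul_lt_iff_lt_one_left hW).1 ?_
    nlinarith [mul_lt_mul_of_pos_left hMj hδpos]
  have hδN : δ * N < 1 := by
    have hv1 : (1 : ℝ) ≤ v k := by exact_mod_cast hv k
    nlinarith [hδv k]
  have hSw := sum_weight_lt_of_root_excess hM hv hq hk hδk hδpos hδN hδ
  obtain ⟨u, hu, huS⟩ :=
    exists_mem_notMem_of_sum_lt_card (fun i _ => hw i) (hSw.trans_le hunit)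
  obtain ⟨hwu, hvu⟩ := (Finset.mem_filter.1 hu).2
  have hx : ∑ i ∈ S, (v i : ℝ) + 1 ≤ x := by
    have := hlower (insert u S) (by rw [Finset.sum_insert huS, hwu]; omega)
    rwa [Finset.sum_insert huS, hvu, Nat.cast_one, add_comm] at this
  have hqk' : ∀ j, N * q j ≤ 1 + δ := fun j => by nlinarith [hk j]
  linarith [sum_mul_lt_add_one (S := S) i.pos hδpos.le hqk' hδv]

end RootDistribution

theorem optimal_pure_subgame_strategy_is_uniform_at_root_general
    (N W M : ℕ) (w v : Fin N → ℕ)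
    (hw : ∀ i, 0 < w i) (hv : ∀ i, 0 < v i)
    (hunit : W ≤ (Finset.univ.filter fun i => w i = 1 ∧ v i = 1).card)
    (hM : IsLeast {m : ℕ | ∀ i, W * N * v i < m ∧ N * w i < m} M)
    (σ : LStrat N) (hσ : LValid σ) (hpure : ∀ i, σ.r i = 0 ∨ σ.r i = 1)
    (x : ℝ)
    (hpayoff : IsGreatest
      {y : ℝ | ∃ τ : FStrat N, BestResponse N w W M σ τ ∧ y = EU1 N v σ τ} x)
    (hopt : IsGreatest
      {y : ℝ | ∃ (σ' : LStrat N) (τ : FStrat N),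
        LValid σ' ∧ BestResponse N w W M σ' τ ∧ y = EU1 N v σ' τ} x)
    (hpos : 0 < x) :
    ∀ i, σ.q i = 1 / (N : ℝ) := by
  obtain ⟨τ, hτ, rfl⟩ := hpayoff.1
  have hg : 0 < τ.g 0 := by
    refine (hτ.1.1 0).lt_of_ne fun h => ?_
    rw [EU1_eq, ← h, zero_mul] at hpos
    exact hpos.false
  have hle : ∀ i, σ.q i ≤ 1 / N :=
    root_prob_le_one_div hw hv hunit (fun i => (hM.1 i).1) hσ.1 hσ.2.1
      (hτ.root_deviation_add_weight_plusSet_le hσ hpure hg)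
      (hτ.EU1_le_sum_plusSet hσ hpure hw hg)
      fun T hT => hopt.2 ⟨_, _, LValid.uniformOn hσ.pos T, bestResponse_uniformOn hσ.pos hT,
        (EU1_uniformOn_pureRoot_zero hσ.pos T).symm⟩
  have hsum : ∑ i, σ.q i = ∑ _i : Fin N, 1 / (N : ℝ) := by
    rw [hσ.2.1, Finset.sum_const, Finset.card_univ, Fintype.card_fin, nsmul_eq_mul,
      mul_one_div_cancel (Nat.cast_pos.2 hσ.pos).ne']
  exact fun i => (Finset.sum_eq_sum_iff_of_le fun j _ => hle j).1 hsum i (Finset.mem_univ i)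

/-- For a Knapsack instance with unit-items, if a leader behavioral
strategy `σ` playing a pure action in every subgame `I_i` is optimal — i.e. its Stackelberg
payoff `x` equals the leader's Stackelberg value of the game in behavioral strategies — and
`x` is strictly positive, then `σ` plays the uniform distribution over `l_1,…,l_N`
at the root. -/
theorem optimal_pure_subgame_strategy_is_uniform_at_root
    (N W M : ℕ) (hN : 0 < N) (w v : Fin N → ℕ)
    (hw : ∀ i, 0 < w i) (hv : ∀ i, 0 < v i)
    (hunit : W ≤ (Finset.univ.filter fun i => w i = 1 ∧ v i = 1).card)
    (hM : IsLeast {m : ℕ | ∀ i, W * N * v i < m ∧ N * w i < m} M)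
    (σ : LStrat N) (hσ : LValid σ) (hpure : ∀ i, σ.r i = 0 ∨ σ.r i = 1)
    (x : ℝ)
    (hpayoff : IsGreatest
      {y : ℝ | ∃ τ : FStrat N, BestResponse N w W M σ τ ∧ y = EU1 N v σ τ} x)
    (hopt : IsGreatest
      {y : ℝ | ∃ (σ' : LStrat N) (τ : FStrat N),
        LValid σ' ∧ BestResponse N w W M σ' τ ∧ y = EU1 N v σ' τ} x)
    (hpos : 0 < x) :
    ∀ i, σ.q i = 1 / (N : ℝ) :=
  optimal_pure_subgame_strategy_is_uniform_at_root_general N W M w v hw hv hunit hM σ hσ hpure x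
    hpayoff hopt hpos

end KnapsackGame
end
end

section
/- Let w_1,…,w_N and v_1,…,v_N be positive integers, and let W, K be positive integers. Form N + W new items: for 1 ≤ i ≤ N, item i has weight w_i and value (W+1)·v_i; for N+1 ≤ i ≤ N+W, item i has weight 1 and value 1 (so at least W of the new items have weight and value 1). Then there exists J ⊆ {1,…,N} with Σ_{i∈J} w_i ≤ W and Σ_{i∈J} v_i ≥ K if and only if there exists J' ⊆ {1,…,N+W} whose total weight (in the new instance) is at most W and whose total value (in the new instance) is at least (W+1)·K. -/
open Finset

section Padding

variable {M : Type*} [AddCommMonoid M] {m n : ℕ}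

theorem Fin.sum_dite_lt_eq (s : Finset (Fin (m + n))) (f : Fin m → M) (c : M) :
    ∑ i ∈ s, (if h : (i : ℕ) < m then f ⟨i, h⟩ else c) =
      ∑ i with Fin.castAdd n i ∈ s, f i + #{j | Fin.natAdd m j ∈ s} • c := by
  rw [← Finset.sum_const, Finset.sum_filter, Finset.sum_filter, ← univ_inter s, ← sum_ite_mem,
    Fin.sum_univ_add]
  simp

theorem Fin.sum_map_castAddEmb_dite_lt (s : Finset (Fin m)) (f : Fin m → M) (c : M) :
    ∑ i ∈ s.map (Fin.castAddEmb n), (if h : (i : ℕ) < m then f ⟨i, h⟩ else c) = ∑ i ∈ s, f i := by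
  simp [sum_map]

end Padding

theorem Nat.le_of_mul_le_mul_add_of_lt {a c k x : ℕ} (hc : c < a) (h : a * k ≤ a * x + c) :
    k ≤ x :=
  Nat.lt_succ_iff.mp <| Nat.lt_of_mul_lt_mul_left <|
    calc a * k ≤ a * x + c := h
      _ < a * (x + 1) := by rw [Nat.mul_succ]; omega

theorem knapsack_unit_items_reduction_general
    (N W K : ℕ) (w v : Fin N → ℕ) :
    (∃ J : Finset (Fin N), (∑ i ∈ J, w i) ≤ W ∧ K ≤ ∑ i ∈ J, v i) ↔
      (∃ J' : Finset (Fin (N + W)),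
        (∑ i ∈ J', (if h : (i : ℕ) < N then w ⟨i, h⟩ else 1)) ≤ W ∧
        (W + 1) * K ≤ ∑ i ∈ J', (if h : (i : ℕ) < N then (W + 1) * v ⟨i, h⟩ else 1)) := by
  constructor
  · rintro ⟨J, hJw, hJv⟩
    refine ⟨J.map (Fin.castAddEmb W), ?_, ?_⟩
    · rwa [Fin.sum_map_castAddEmb_dite_lt]
    · rw [Fin.sum_map_castAddEmb_dite_lt J (fun i => (W + 1) * v i), ← mul_sum]
      exact Nat.mul_le_mul_left _ hJv
  · rintro ⟨J', hJw, hJv⟩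
    rw [Fin.sum_dite_lt_eq, smul_eq_mul, mul_one] at hJw
    rw [Fin.sum_dite_lt_eq J' (fun i => (W + 1) * v i), smul_eq_mul, mul_one] at hJv
    refine ⟨({i | Fin.castAdd W i ∈ J'} : Finset (Fin N)), by omega, ?_⟩
    -- at most `W` unit items fit, and together they are worth less than one scaled value unit
    refine Nat.le_of_mul_le_mul_add_of_lt (a := W + 1) (c := #{j | Fin.natAdd N j ∈ J'})
      (by omega) ?_
    rwa [mul_sum]

/-- **Correctness of the reduction from Knapsack to Knapsack with unit-items.**
Given positive integer weights `w` and values `v` on `N` items and positive integers `W`, `K`,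
form `N + W` new items: for `i < N` item `i` has weight `w i` and value `(W+1) * v i`;
the remaining `W` items have weight `1` and value `1`.  There is a subset of the original
items of total weight at most `W` and total value at least `K` iff there is a subset of the
new items of total weight at most `W` and total value at least `(W+1) * K`. -/
theorem knapsack_unit_items_reduction
    (N W K : ℕ) (w v : Fin N → ℕ)
    (hw : ∀ i, 0 < w i) (hv : ∀ i, 0 < v i) (hW : 0 < W) (hK : 0 < K) :
    (∃ J : Finset (Fin N), (∑ i ∈ J, w i) ≤ W ∧ K ≤ ∑ i ∈ J, v i) ↔
      (∃ J' : Finset (Fin (N + W)),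
        (∑ i ∈ J', (if h : (i : ℕ) < N then w ⟨i, h⟩ else 1)) ≤ W ∧
        (W + 1) * K ≤ ∑ i ∈ J', (if h : (i : ℕ) < N then (W + 1) * v ⟨i, h⟩ else 1)) :=
  knapsack_unit_items_reduction_general N W K w v
end

section
/- Let T be a binary turn-based game tree with chance nodes whose root is a follower node of height H, with children subtrees L and R of heights at most H − 1 and follower minmax values μ(L), μ(R). Suppose the tables A_L, A_R : {0,…,n−1} → ℝ ∪ {−∞} satisfy the table guarantee for L and R (with their respective heights). Define A_T[k] := max( A_L[k]↓_{μ(R)}, A_R[k]↓_{μ(L)} ), where x↓_μ = x if x ≥ μ and x↓_μ = −∞ otherwise. Then A_T satisfies the table guarantee for T with height H. -/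
open scoped BigOperators

noncomputable section

/-- A binary turn-based game tree with chance nodes: every internal node is a leader node,
a follower node, or a chance node (with probability `p` of going left), and every leaf
carries real utilities `(u1, u2)` for the leader and the follower. -/
inductive BT : Type
  | leaf (u1 u2 : ℝ) : BT
  | leader (L R : BT) : BT
  | follower (L R : BT) : BT
  | chance (p : ℝ) (L R : BT) : BT

namespace BT

/-- The chance probabilities form probability distributions. -/
def ValidChance : BT → Prop
  | .leaf _ _ => True
  | .leader L R => ValidChance L ∧ ValidChance R
  | .follower L R => ValidChance L ∧ ValidChance R
  | .chance p L R => 0 ≤ p ∧ p ≤ 1 ∧ ValidChance L ∧ ValidChance R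

/-- The height of a game tree. -/
def height : BT → ℕ
  | .leaf _ _ => 0
  | .leader L R => max (height L) (height R) + 1
  | .follower L R => max (height L) (height R) + 1
  | .chance _ L R => max (height L) (height R) + 1

/-- Behavioral strategies of the leader: a probability of moving left at each leader node. -/
def LB : BT → Type
  | .leaf _ _ => PUnit
  | .leader L R => ℝ × LB L × LB R
  | .follower L R => LB L × LB R
  | .chance _ L R => LB L × LB R

/-- Behavioral strategies of the follower: a probability of moving left at each follower
node. -/
def FB : BT → Type
  | .leaf _ _ => PUnit
  | .leader L R => FB L × FB R
  | .follower L R => ℝ × FB L × FB R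
  | .chance _ L R => FB L × FB R

/-- Validity of a leader behavioral strategy: all probabilities lie in `[0,1]`. -/
def LBValid : (t : BT) → LB t → Prop
  | .leaf _ _, _ => True
  | .leader L R, σ => 0 ≤ σ.1 ∧ σ.1 ≤ 1 ∧ LBValid L σ.2.1 ∧ LBValid R σ.2.2
  | .follower L R, σ => LBValid L σ.1 ∧ LBValid R σ.2
  | .chance _ L R, σ => LBValid L σ.1 ∧ LBValid R σ.2

/-- Validity of a follower behavioral strategy: all probabilities lie in `[0,1]`. -/
def FBValid : (t : BT) → FB t → Prop
  | .leaf _ _, _ => True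
  | .leader L R, τ => FBValid L τ.1 ∧ FBValid R τ.2
  | .follower L R, τ => 0 ≤ τ.1 ∧ τ.1 ≤ 1 ∧ FBValid L τ.2.1 ∧ FBValid R τ.2.2
  | .chance _ L R, τ => FBValid L τ.1 ∧ FBValid R τ.2

/-- Expected utilities `(leader, follower)` of a behavioral strategy profile. -/
def eu : (t : BT) → LB t → FB t → ℝ × ℝ
  | .leaf u1 u2, _, _ => (u1, u2)
  | .leader L R, σ, τ => σ.1 • eu L σ.2.1 τ.1 + (1 - σ.1) • eu R σ.2.2 τ.2
  | .follower L R, σ, τ => τ.1 • eu L σ.1 τ.2.1 + (1 - τ.1) • eu R σ.2 τ.2.2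
  | .chance p L R, σ, τ => p • eu L σ.1 τ.1 + (1 - p) • eu R σ.2 τ.2

/-- `τ` is a best response of the follower to the leader behavioral strategy `σ`. -/
def BestResponse (t : BT) (σ : LB t) (τ : FB t) : Prop :=
  FBValid t τ ∧ ∀ τ' : FB t, FBValid t τ' → (eu t σ τ').2 ≤ (eu t σ τ).2

/-- `μ t`: the follower's value of the zero-sum game on `t` in which the leader plays to
minimize the follower's expected utility and the follower plays a best response. -/
def μ (t : BT) : ℝ :=
  sInf {x : ℝ | ∃ σ : LB t, LBValid t σ ∧
    x = sSup {y : ℝ | ∃ τ : FB t, FBValid t τ ∧ y = (eu t σ τ).2}}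

/-- A table `A : {0,…,n−1} → ℝ ∪ {−∞}` satisfies the *table guarantee* for a subtree `t`
with height parameter `H` if:
(a) for every index `k` with `A k > −∞`, the leader has a behavioral strategy, together
with a follower best response to it, giving the follower expected utility exactly `A k`
while securing expected utility at least `k` to the leader; and
(b) no leader behavioral strategy, with a follower best response to it, offers the follower
expected utility strictly more than `A k` while securing expected utility at least `k + H`
to the leader. -/
def TableGuarantee (t : BT) (H n : ℕ) (A : Fin n → EReal) : Prop :=
  (∀ k : Fin n, A k ≠ ⊥ →
    ∃ (σ : LB t) (τ : FB t), LBValid t σ ∧ BestResponse t σ τ ∧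
      (((eu t σ τ).2 : ℝ) : EReal) = A k ∧ ((k : ℕ) : ℝ) ≤ (eu t σ τ).1) ∧
  (∀ (k : Fin n) (σ : LB t) (τ : FB t), LBValid t σ → BestResponse t σ τ →
    ((k : ℕ) : ℝ) + (H : ℝ) ≤ (eu t σ τ).1 → (((eu t σ τ).2 : ℝ) : EReal) ≤ A k)

/-- `x ↓ m`: `x` if `x ≥ m`, and `−∞` otherwise. -/
def cutoff (x : EReal) (m : ℝ) : EReal := if ((m : ℝ) : EReal) ≤ x then x else ⊥
/-! ### Auxiliary material -/

lemma convex_le {q a b m : ℝ} (hq0 : 0 ≤ q) (hq1 : q ≤ 1) (ha : a ≤ m) (hb : b ≤ m) :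
    q * a + (1 - q) * b ≤ m := by nlinarith

lemma convex_ge {q a b m : ℝ} (hq0 : 0 ≤ q) (hq1 : q ≤ 1) (ha : m ≤ a) (hb : m ≤ b) :
    m ≤ q * a + (1 - q) * b := by nlinarith

lemma smul_add_snd (c : ℝ) (x y : ℝ × ℝ) :
    (c • x + (1 - c) • y).2 = c * x.2 + (1 - c) * y.2 := by
  simp [smul_eq_mul]

lemma smul_add_fst (c : ℝ) (x y : ℝ × ℝ) :
    (c • x + (1 - c) • y).1 = c * x.1 + (1 - c) * y.1 := by
  simp [smul_eq_mul]

/-- Minimum follower leaf utility. -/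
def minU2 : BT → ℝ
  | .leaf _ u2 => u2
  | .leader L R => min (minU2 L) (minU2 R)
  | .follower L R => min (minU2 L) (minU2 R)
  | .chance _ L R => min (minU2 L) (minU2 R)

/-- Maximum follower leaf utility. -/
def maxU2 : BT → ℝ
  | .leaf _ u2 => u2
  | .leader L R => max (maxU2 L) (maxU2 R)
  | .follower L R => max (maxU2 L) (maxU2 R)
  | .chance _ L R => max (maxU2 L) (maxU2 R)

/-- A default follower strategy. -/
def FBdef : (t : BT) → FB t
  | .leaf _ _ => PUnit.unit
  | .leader L R => (FBdef L, FBdef R)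
  | .follower L R => (0, FBdef L, FBdef R)
  | .chance _ L R => (FBdef L, FBdef R)

lemma FBdef_valid : ∀ t : BT, FBValid t (FBdef t)
  | .leaf _ _ => trivial
  | .leader L R => ⟨FBdef_valid L, FBdef_valid R⟩
  | .follower L R => ⟨le_refl 0, zero_le_one, FBdef_valid L, FBdef_valid R⟩
  | .chance _ L R => ⟨FBdef_valid L, FBdef_valid R⟩

lemma eu2_le_maxU2 : ∀ (t : BT) (σ : LB t) (τ : FB t), ValidChance t → LBValid t σ →
    FBValid t τ → (eu t σ τ).2 ≤ maxU2 t
  | .leaf _ _, _, _, _, _, _ => le_refl _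
  | .leader L R, σ, τ, hc, hσ, hτ => by
    rw [eu, smul_add_snd, maxU2]
    exact convex_le hσ.1 hσ.2.1
      ((eu2_le_maxU2 L _ _ hc.1 hσ.2.2.1 hτ.1).trans (le_max_left _ _))
      ((eu2_le_maxU2 R _ _ hc.2 hσ.2.2.2 hτ.2).trans (le_max_right _ _))
  | .follower L R, σ, τ, hc, hσ, hτ => by
    rw [eu, smul_add_snd, maxU2]
    exact convex_le hτ.1 hτ.2.1
      ((eu2_le_maxU2 L _ _ hc.1 hσ.1 hτ.2.2.1).trans (le_max_left _ _))
      ((eu2_le_maxU2 R _ _ hc.2 hσ.2 hτ.2.2.2).trans (le_max_right _ _))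
  | .chance p L R, σ, τ, hc, hσ, hτ => by
    rw [eu, smul_add_snd, maxU2]
    exact convex_le hc.1 hc.2.1
      ((eu2_le_maxU2 L _ _ hc.2.2.1 hσ.1 hτ.1).trans (le_max_left _ _))
      ((eu2_le_maxU2 R _ _ hc.2.2.2 hσ.2 hτ.2).trans (le_max_right _ _))

lemma minU2_le_eu2 : ∀ (t : BT) (σ : LB t) (τ : FB t), ValidChance t → LBValid t σ →
    FBValid t τ → minU2 t ≤ (eu t σ τ).2
  | .leaf _ _, _, _, _, _, _ => le_refl _
  | .leader L R, σ, τ, hc, hσ, hτ => by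
    rw [eu, smul_add_snd, minU2]
    exact convex_ge hσ.1 hσ.2.1
      ((min_le_left _ _).trans (minU2_le_eu2 L _ _ hc.1 hσ.2.2.1 hτ.1))
      ((min_le_right _ _).trans (minU2_le_eu2 R _ _ hc.2 hσ.2.2.2 hτ.2))
  | .follower L R, σ, τ, hc, hσ, hτ => by
    rw [eu, smul_add_snd, minU2]
    exact convex_ge hτ.1 hτ.2.1
      ((min_le_left _ _).trans (minU2_le_eu2 L _ _ hc.1 hσ.1 hτ.2.2.1))
      ((min_le_right _ _).trans (minU2_le_eu2 R _ _ hc.2 hσ.2 hτ.2.2.2))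
  | .chance p L R, σ, τ, hc, hσ, hτ => by
    rw [eu, smul_add_snd, minU2]
    exact convex_ge hc.1 hc.2.1
      ((min_le_left _ _).trans (minU2_le_eu2 L _ _ hc.2.2.1 hσ.1 hτ.1))
      ((min_le_right _ _).trans (minU2_le_eu2 R _ _ hc.2.2.2 hσ.2 hτ.2))

/-- The follower minmax value, computed recursively. -/
def v : BT → ℝ
  | .leaf _ u2 => u2
  | .leader L R => min (v L) (v R)
  | .follower L R => max (v L) (v R)
  | .chance p L R => p * v L + (1 - p) * v R

/-- A leader strategy minimizing the follower's utility. -/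
def minStrat : (t : BT) → LB t
  | .leaf _ _ => PUnit.unit
  | .leader L R => (if v L ≤ v R then 1 else 0, minStrat L, minStrat R)
  | .follower L R => (minStrat L, minStrat R)
  | .chance _ L R => (minStrat L, minStrat R)

lemma minStrat_valid : ∀ t : BT, LBValid t (minStrat t)
  | .leaf _ _ => trivial
  | .leader L R => by
    refine ⟨?_, ?_, minStrat_valid L, minStrat_valid R⟩ <;>
      · simp only [minStrat]; split <;> norm_num
  | .follower L R => ⟨minStrat_valid L, minStrat_valid R⟩
  | .chance _ L R => ⟨minStrat_valid L, minStrat_valid R⟩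

/-- Playing `minStrat`, the leader holds the follower down to `v t`. -/
lemma punish : ∀ (t : BT) (τ : FB t), ValidChance t → FBValid t τ →
    (eu t (minStrat t) τ).2 ≤ v t
  | .leaf _ _, _, _, _ => le_refl _
  | .leader L R, τ, hc, hτ => by
    rw [eu, smul_add_snd, v]
    have hL := punish L τ.1 hc.1 hτ.1
    have hR := punish R τ.2 hc.2 hτ.2
    simp only [minStrat]
    split <;> rename_i h <;> simp only [min_def, if_pos h, min_def] <;> [skip; rw [if_neg h]] <;>
      nlinarith
  | .follower L R, τ, hc, hτ => by
    rw [eu, smul_add_snd, v]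
    have hL := punish L τ.2.1 hc.1 hτ.2.2.1
    have hR := punish R τ.2.2 hc.2 hτ.2.2.2
    exact convex_le hτ.1 hτ.2.1 (hL.trans (le_max_left _ _)) (hR.trans (le_max_right _ _))
  | .chance p L R, τ, hc, hτ => by
    rw [eu, smul_add_snd, v]
    have hL := punish L τ.1 hc.2.2.1 hτ.1
    have hR := punish R τ.2 hc.2.2.2 hτ.2
    simp only [minStrat]
    nlinarith [hc.1, hc.2.1]

/-- Against any leader strategy, the follower can secure `v t`. -/
lemma secure : ∀ (t : BT) (σ : LB t), ValidChance t → LBValid t σ →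
    ∃ τ : FB t, FBValid t τ ∧ v t ≤ (eu t σ τ).2
  | .leaf _ _, _, _, _ => ⟨PUnit.unit, trivial, le_refl _⟩
  | .leader L R, σ, hc, hσ => by
    obtain ⟨τL, hτL, hL⟩ := secure L σ.2.1 hc.1 hσ.2.2.1
    obtain ⟨τR, hτR, hR⟩ := secure R σ.2.2 hc.2 hσ.2.2.2
    refine ⟨(τL, τR), ⟨hτL, hτR⟩, ?_⟩
    simp only [eu, smul_add_snd, v]
    exact convex_ge hσ.1 hσ.2.1 ((min_le_left _ _).trans hL) ((min_le_right _ _).trans hR)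
  | .follower L R, σ, hc, hσ => by
    obtain ⟨τL, hτL, hL⟩ := secure L σ.1 hc.1 hσ.1
    obtain ⟨τR, hτR, hR⟩ := secure R σ.2 hc.2 hσ.2
    rcases le_total (v L) (v R) with h | h
    · refine ⟨(0, τL, τR), ⟨le_refl 0, zero_le_one, hτL, hτR⟩, ?_⟩
      simp only [eu, smul_add_snd, v]
      simp only [max_eq_right h]
      linarith
    · refine ⟨(1, τL, τR), ⟨zero_le_one, le_refl 1, hτL, hτR⟩, ?_⟩
      simp only [eu, smul_add_snd, v]
      simp only [max_eq_left h]
      linarith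
  | .chance p L R, σ, hc, hσ => by
    obtain ⟨τL, hτL, hL⟩ := secure L σ.1 hc.2.2.1 hσ.1
    obtain ⟨τR, hτR, hR⟩ := secure R σ.2 hc.2.2.2 hσ.2
    refine ⟨(τL, τR), ⟨hτL, hτR⟩, ?_⟩
    simp only [eu, smul_add_snd, v]
    nlinarith [hc.1, hc.2.1]

lemma μ_eq (t : BT) (hc : ValidChance t) : μ t = v t := by
  have hbdd : ∀ σ : LB t, LBValid t σ →
      BddAbove {y : ℝ | ∃ τ : FB t, FBValid t τ ∧ y = (eu t σ τ).2} := by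
    intro σ hσ
    refine ⟨maxU2 t, ?_⟩
    rintro y ⟨τ, hτ, rfl⟩
    exact eu2_le_maxU2 t σ τ hc hσ hτ
  have hbelow : BddBelow {x : ℝ | ∃ σ : LB t, LBValid t σ ∧
      x = sSup {y : ℝ | ∃ τ : FB t, FBValid t τ ∧ y = (eu t σ τ).2}} := by
    refine ⟨minU2 t, ?_⟩
    rintro x ⟨σ, hσ, rfl⟩
    exact (minU2_le_eu2 t σ (FBdef t) hc hσ (FBdef_valid t)).trans
      (le_csSup (hbdd σ hσ) ⟨FBdef t, FBdef_valid t, rfl⟩)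
  apply le_antisymm
  · calc μ t ≤ sSup {y : ℝ | ∃ τ : FB t, FBValid t τ ∧ y = (eu t (minStrat t) τ).2} :=
          csInf_le hbelow ⟨minStrat t, minStrat_valid t, rfl⟩
      _ ≤ v t := by
          refine csSup_le ⟨(eu t (minStrat t) (FBdef t)).2, FBdef t, FBdef_valid t, rfl⟩ ?_
          rintro y ⟨τ, hτ, rfl⟩
          exact punish t τ hc hτ
  · refine le_csInf ⟨_, minStrat t, minStrat_valid t, rfl⟩ ?_
    rintro x ⟨σ, hσ, rfl⟩
    obtain ⟨τ, hτ, hle⟩ := secure t σ hc hσ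
    exact hle.trans (le_csSup (hbdd σ hσ) ⟨τ, hτ, rfl⟩)

/-- **follower node.**  If `T` is a follower node of height `H` with
children `L`, `R` (of heights at most `H − 1`) with follower minmax values `μ L`, `μ R`,
and the tables `A_L`, `A_R` satisfy the table guarantee with the respective heights, then
the table `A_T[k] := max( A_L[k]↓_{μ R}, A_R[k]↓_{μ L} )` satisfies the table guarantee
for `T` with height `H`. -/
theorem follower_node_table (L R : BT) (hvc : ValidChance (BT.follower L R))
    (H n : ℕ) (hH : H = height (BT.follower L R))
    (A_L A_R : Fin n → EReal)
    (hL : TableGuarantee L (height L) n A_L)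
    (hR : TableGuarantee R (height R) n A_R) :
    TableGuarantee (BT.follower L R) H n (fun k =>
      max (cutoff (A_L k) (μ R)) (cutoff (A_R k) (μ L))) := by
  obtain ⟨hvL, hvR⟩ := hvc
  have hμL : μ L = v L := μ_eq L hvL
  have hμR : μ R = v R := μ_eq R hvR
  have hHL : (height L : ℝ) ≤ (H : ℝ) := by
    rw [hH]; exact_mod_cast Nat.le_of_lt (by rw [height]; omega)
  have hHR : (height R : ℝ) ≤ (H : ℝ) := by
    rw [hH]; exact_mod_cast Nat.le_of_lt (by rw [height]; omega)
  constructor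
  · -- part (a)
    intro k hk
    simp only [hμL, hμR] at hk ⊢
    rcases max_choice (cutoff (A_L k) (v R)) (cutoff (A_R k) (v L)) with hmax | hmax <;>
      rw [hmax] at hk ⊢
    · -- left branch achieves the max
      by_cases hcut : ((v R : ℝ) : EReal) ≤ A_L k
      swap
      · rw [cutoff, if_neg hcut] at hk; exact absurd rfl hk
      rw [cutoff, if_pos hcut] at hk ⊢
      obtain ⟨σL, τL, hσL, hBRL, heq, hk1⟩ := hL.1 k hk
      have ha : v R ≤ (eu L σL τL).2 := by
        rw [← heq] at hcut; exact_mod_cast hcut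
      refine ⟨(σL, minStrat R), (1, τL, FBdef R), ⟨hσL, minStrat_valid R⟩,
        ⟨⟨zero_le_one, le_refl 1, hBRL.1, FBdef_valid R⟩, ?_⟩, ?_, ?_⟩
      · intro τ' hτ'
        simp only [eu, smul_add_snd]
        have h1' := hBRL.2 τ'.2.1 hτ'.2.2.1
        have h2' := (punish R τ'.2.2 hvR hτ'.2.2.2).trans ha
        nlinarith [hτ'.1, hτ'.2.1]
      · simp only [eu, smul_add_snd]
        rw [show (1:ℝ) * (eu L σL τL).2 + (1 - 1) * (eu R (minStrat R) (FBdef R)).2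
            = (eu L σL τL).2 by ring]
        exact heq
      · simp only [eu, smul_add_fst]
        rw [show (1:ℝ) * (eu L σL τL).1 + (1 - 1) * (eu R (minStrat R) (FBdef R)).1
            = (eu L σL τL).1 by ring]
        exact hk1
    · -- right branch achieves the max
      by_cases hcut : ((v L : ℝ) : EReal) ≤ A_R k
      swap
      · rw [cutoff, if_neg hcut] at hk; exact absurd rfl hk
      rw [cutoff, if_pos hcut] at hk ⊢
      obtain ⟨σR, τR, hσR, hBRR, heq, hk1⟩ := hR.1 k hk
      have ha : v L ≤ (eu R σR τR).2 := by
        rw [← heq] at hcut; exact_mod_cast hcut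
      refine ⟨(minStrat L, σR), (0, FBdef L, τR), ⟨minStrat_valid L, hσR⟩,
        ⟨⟨le_refl 0, zero_le_one, FBdef_valid L, hBRR.1⟩, ?_⟩, ?_, ?_⟩
      · intro τ' hτ'
        simp only [eu, smul_add_snd]
        have h1' := hBRR.2 τ'.2.2 hτ'.2.2.2
        have h2' := (punish L τ'.2.1 hvL hτ'.2.2.1).trans ha
        nlinarith [hτ'.1, hτ'.2.1]
      · simp only [eu, smul_add_snd]
        rw [show (0:ℝ) * (eu L (minStrat L) (FBdef L)).2 + (1 - 0) * (eu R σR τR).2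
            = (eu R σR τR).2 by ring]
        exact heq
      · simp only [eu, smul_add_fst]
        rw [show (0:ℝ) * (eu L (minStrat L) (FBdef L)).1 + (1 - 0) * (eu R σR τR).1
            = (eu R σR τR).1 by ring]
        exact hk1
  · -- part (b)
    intro k σ τ hσ hBR hk1
    obtain ⟨⟨hq0, hq1, hτL, hτR⟩, hbr⟩ := hBR
    simp only [hμL, hμR]
    have heu2 : (eu (BT.follower L R) σ τ).2
        = τ.1 * (eu L σ.1 τ.2.1).2 + (1 - τ.1) * (eu R σ.2 τ.2.2).2 := by
      rw [eu, smul_add_snd]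
    have heu1 : (eu (BT.follower L R) σ τ).1
        = τ.1 * (eu L σ.1 τ.2.1).1 + (1 - τ.1) * (eu R σ.2 τ.2.2).1 := by
      rw [eu, smul_add_fst]
    have hLdev : ∀ τL', FBValid L τL' →
        (eu L σ.1 τL').2 ≤ (eu (BT.follower L R) σ τ).2 := by
      intro τL' h
      have := hbr (1, τL', τ.2.2) ⟨zero_le_one, le_refl 1, h, hτR⟩
      rw [heu2]
      simp only [eu, smul_add_snd] at this
      simpa using this
    have hRdev : ∀ τR', FBValid R τR' →
        (eu R σ.2 τR').2 ≤ (eu (BT.follower L R) σ τ).2 := by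
      intro τR' h
      have := hbr (0, τ.2.1, τR') ⟨le_refl 0, zero_le_one, hτL, h⟩
      rw [heu2]
      simp only [eu, smul_add_snd] at this
      simpa using this
    have ha : (eu L σ.1 τ.2.1).2 ≤ (eu (BT.follower L R) σ τ).2 := hLdev _ hτL
    have hb : (eu R σ.2 τ.2.2).2 ≤ (eu (BT.follower L R) σ τ).2 := hRdev _ hτR
    have hvLle : v L ≤ (eu (BT.follower L R) σ τ).2 := by
      obtain ⟨τL', h', hle⟩ := secure L σ.1 hvL hσ.1
      exact hle.trans (hLdev _ h')
    have hvRle : v R ≤ (eu (BT.follower L R) σ τ).2 := by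
      obtain ⟨τR', h', hle⟩ := secure R σ.2 hvR hσ.2
      exact hle.trans (hRdev _ h')
    have sideL : (eu (BT.follower L R) σ τ).2 = (eu L σ.1 τ.2.1).2 →
        ((k : ℕ) : ℝ) + (height L : ℝ) ≤ (eu L σ.1 τ.2.1).1 →
        (((eu (BT.follower L R) σ τ).2 : ℝ) : EReal)
          ≤ max (cutoff (A_L k) (v R)) (cutoff (A_R k) (v L)) := by
      intro he h1L
      have hBRL : BestResponse L σ.1 τ.2.1 :=
        ⟨hτL, fun τL' h => (hLdev τL' h).trans_eq he⟩
      have hAL : (((eu L σ.1 τ.2.1).2 : ℝ) : EReal) ≤ A_L k := hL.2 k σ.1 τ.2.1 hσ.1 hBRL h1L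
      have hcut : ((v R : ℝ) : EReal) ≤ A_L k :=
        le_trans (EReal.coe_le_coe_iff.mpr (hvRle.trans_eq he)) hAL
      refine le_trans ?_ (le_max_left _ _)
      rw [cutoff, if_pos hcut, he]
      exact hAL
    have sideR : (eu (BT.follower L R) σ τ).2 = (eu R σ.2 τ.2.2).2 →
        ((k : ℕ) : ℝ) + (height R : ℝ) ≤ (eu R σ.2 τ.2.2).1 →
        (((eu (BT.follower L R) σ τ).2 : ℝ) : EReal)
          ≤ max (cutoff (A_L k) (v R)) (cutoff (A_R k) (v L)) := by
      intro he h1R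
      have hBRR : BestResponse R σ.2 τ.2.2 :=
        ⟨hτR, fun τR' h => (hRdev τR' h).trans_eq he⟩
      have hAR : (((eu R σ.2 τ.2.2).2 : ℝ) : EReal) ≤ A_R k := hR.2 k σ.2 τ.2.2 hσ.2 hBRR h1R
      have hcut : ((v L : ℝ) : EReal) ≤ A_R k :=
        le_trans (EReal.coe_le_coe_iff.mpr (hvLle.trans_eq he)) hAR
      refine le_trans ?_ (le_max_right _ _)
      rw [cutoff, if_pos hcut, he]
      exact hAR
    rcases eq_or_lt_of_le hq0 with hq | hq
    · -- q = 0
      apply sideR (by rw [heu2, ← hq]; ring)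
      have : (eu (BT.follower L R) σ τ).1 = (eu R σ.2 τ.2.2).1 := by
        rw [heu1, ← hq]; ring
      rw [this] at hk1
      linarith
    rcases eq_or_lt_of_le hq1 with hq' | hq'
    · -- q = 1
      apply sideL (by rw [heu2, hq']; ring)
      have : (eu (BT.follower L R) σ τ).1 = (eu L σ.1 τ.2.1).1 := by
        rw [heu1, hq']; ring
      rw [this] at hk1
      linarith
    · -- 0 < q < 1
      have hea : (eu (BT.follower L R) σ τ).2 = (eu L σ.1 τ.2.1).2 := by nlinarith
      have heb : (eu (BT.follower L R) σ τ).2 = (eu R σ.2 τ.2.2).2 := by nlinarith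
      rcases le_total (eu L σ.1 τ.2.1).1 (eu R σ.2 τ.2.2).1 with h | h
      · apply sideR heb
        have : (eu (BT.follower L R) σ τ).1 ≤ (eu R σ.2 τ.2.2).1 := by
          rw [heu1]; nlinarith
        linarith
      · apply sideL hea
        have : (eu (BT.follower L R) σ τ).1 ≤ (eu L σ.1 τ.2.1).1 := by
          rw [heu1]; nlinarith
        linarith

end BT
end
end

section
/- Let T be a binary turn-based game tree with chance nodes whose root is a leader node of height H, with children subtrees L and R of heights at most H − 1. Suppose the tables A_L, A_R : {0,…,n−1} → ℝ ∪ {−∞} satisfy the pure table guarantee for L and R (with their respective heights). Define A_T[k] := max{ A_c[i] : i ≥ k, c ∈ {L, R} } for each k ∈ {0,…,n−1} (with max ∅ = −∞). Then A_T satisfies the pure table guarantee for T with height H. -/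
open scoped BigOperators

noncomputable section

namespace BT

/-- Pure strategies of the leader: a choice of child (`true` = left) at each leader node. -/
def LP : BT → Type
  | .leaf _ _ => PUnit
  | .leader L R => Bool × LP L × LP R
  | .follower L R => LP L × LP R
  | .chance _ L R => LP L × LP R

/-- The behavioral strategy corresponding to a pure leader strategy. -/
def toLB : (t : BT) → LP t → LB t
  | .leaf _ _, _ => PUnit.unit
  | .leader L R, π => ((if π.1 then (1 : ℝ) else 0), toLB L π.2.1, toLB R π.2.2)
  | .follower L R, π => (toLB L π.1, toLB R π.2)
  | .chance _ L R, π => (toLB L π.1, toLB R π.2)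

/-- The *pure table guarantee*: as the table guarantee, but with the leader restricted to
pure strategies. -/
def PureTableGuarantee (t : BT) (H n : ℕ) (A : Fin n → EReal) : Prop :=
  (∀ k : Fin n, A k ≠ ⊥ →
    ∃ (π : LP t) (τ : FB t), BestResponse t (toLB t π) τ ∧
      (((eu t (toLB t π) τ).2 : ℝ) : EReal) = A k ∧
      ((k : ℕ) : ℝ) ≤ (eu t (toLB t π) τ).1) ∧
  (∀ (k : Fin n) (π : LP t) (τ : FB t), BestResponse t (toLB t π) τ →
    ((k : ℕ) : ℝ) + (H : ℝ) ≤ (eu t (toLB t π) τ).1 →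
    (((eu t (toLB t π) τ).2 : ℝ) : EReal) ≤ A k)

/-! A pure leader strategy at a leader node commits to one child, and the follower's best
responses to it are exactly the best responses in that child paired with any valid strategy
in the other. Hence the payoff pairs realisable with a best response at the node are those
realisable in `L` or in `R`: an entry `A_c i` with `i ≥ k` is realised with leader payoff at
least `i ≥ k`, and a realisation with leader payoff at least `k + H ≥ k + height c` is bounded
by `A_c k`. -/

lemma exists_fbValid : (t : BT) → ∃ τ : FB t, FBValid t τ
  | .leaf _ _ => ⟨PUnit.unit, trivial⟩
  | .leader L R | .chance _ L R => by
    obtain ⟨τL, hL⟩ := exists_fbValid L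
    obtain ⟨τR, hR⟩ := exists_fbValid R
    exact ⟨(τL, τR), hL, hR⟩
  | .follower L R => by
    obtain ⟨τL, hL⟩ := exists_fbValid L
    obtain ⟨τR, hR⟩ := exists_fbValid R
    exact ⟨(0, τL, τR), le_rfl, zero_le_one, hL, hR⟩

lemma nonempty_LP : (t : BT) → Nonempty (LP t)
  | .leaf _ _ => ⟨PUnit.unit⟩
  | .leader L R =>
    have := nonempty_LP L; have := nonempty_LP R
    ⟨(true, Classical.arbitrary _, Classical.arbitrary _)⟩
  | .follower L R | .chance _ L R =>
    have := nonempty_LP L; have := nonempty_LP R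
    ⟨(Classical.arbitrary _, Classical.arbitrary _)⟩

section Leader

variable {L R : BT} {πL : LP L} {πR : LP R}

lemma eu_toLB_leader_true (τ : FB (leader L R)) :
    eu (leader L R) (toLB _ (true, πL, πR)) τ = eu L (toLB L πL) τ.1 := by
  simp [eu, toLB]

lemma eu_toLB_leader_false (τ : FB (leader L R)) :
    eu (leader L R) (toLB _ (false, πL, πR)) τ = eu R (toLB R πR) τ.2 := by
  simp [eu, toLB]

lemma bestResponse_leader_true_iff {τ : FB (leader L R)} :
    BestResponse (leader L R) (toLB _ (true, πL, πR)) τ ↔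
      BestResponse L (toLB L πL) τ.1 ∧ FBValid R τ.2 := by
  simp only [BestResponse, eu_toLB_leader_true]
  constructor
  · rintro ⟨⟨hτL, hτR⟩, hbest⟩
    exact ⟨⟨hτL, fun τ' hτ' => hbest (τ', τ.2) ⟨hτ', hτR⟩⟩, hτR⟩
  · rintro ⟨⟨hτL, hbest⟩, hτR⟩
    exact ⟨⟨hτL, hτR⟩, fun τ' hτ' => hbest τ'.1 hτ'.1⟩

lemma bestResponse_leader_false_iff {τ : FB (leader L R)} :
    BestResponse (leader L R) (toLB _ (false, πL, πR)) τ ↔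
      FBValid L τ.1 ∧ BestResponse R (toLB R πR) τ.2 := by
  simp only [BestResponse, eu_toLB_leader_false]
  constructor
  · rintro ⟨⟨hτL, hτR⟩, hbest⟩
    exact ⟨hτL, hτR, fun τ' hτ' => hbest (τ.1, τ') ⟨hτL, hτ'⟩⟩
  · rintro ⟨hτL, hτR, hbest⟩
    exact ⟨⟨hτL, hτR⟩, fun τ' hτ' => hbest τ'.2 hτ'.2⟩

lemma exists_leader_of_left {τL : FB L} (h : BestResponse L (toLB L πL) τL) (R : BT) :
    ∃ (π : LP (leader L R)) (τ : FB (leader L R)), BestResponse _ (toLB _ π) τ ∧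
      eu _ (toLB _ π) τ = eu L (toLB L πL) τL := by
  obtain ⟨τR, hτR⟩ := exists_fbValid R
  obtain ⟨πR⟩ := nonempty_LP R
  exact ⟨(true, πL, πR), (τL, τR), bestResponse_leader_true_iff.2 ⟨h, hτR⟩,
    eu_toLB_leader_true _⟩

lemma exists_leader_of_right {τR : FB R} (h : BestResponse R (toLB R πR) τR) (L : BT) :
    ∃ (π : LP (leader L R)) (τ : FB (leader L R)), BestResponse _ (toLB _ π) τ ∧
      eu _ (toLB _ π) τ = eu R (toLB R πR) τR := by
  obtain ⟨τL, hτL⟩ := exists_fbValid L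
  obtain ⟨πL⟩ := nonempty_LP L
  exact ⟨(false, πL, πR), (τL, τR), bestResponse_leader_false_iff.2 ⟨hτL, h⟩,
    eu_toLB_leader_false _⟩

lemma BestResponse.leader_cases {π : LP (leader L R)} {τ : FB (leader L R)}
    (h : BestResponse _ (toLB _ π) τ) :
    (∃ (πL : LP L) (τL : FB L), BestResponse L (toLB L πL) τL ∧
      eu _ (toLB _ π) τ = eu L (toLB L πL) τL) ∨
    (∃ (πR : LP R) (τR : FB R), BestResponse R (toLB R πR) τR ∧
      eu _ (toLB _ π) τ = eu R (toLB R πR) τR) := by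
  obtain ⟨_ | _, πL, πR⟩ := π
  · exact .inr ⟨πR, τ.2, (bestResponse_leader_false_iff.1 h).2, eu_toLB_leader_false _⟩
  · exact .inl ⟨πL, τ.1, (bestResponse_leader_true_iff.1 h).1, eu_toLB_leader_true _⟩

end Leader

lemma PureTableGuarantee.mono_height {t : BT} {h H n : ℕ} {A : Fin n → EReal}
    (hA : PureTableGuarantee t h n A) (hH : h ≤ H) : PureTableGuarantee t H n A :=
  ⟨hA.1, fun k π τ hbr hk => hA.2 k π τ hbr <| le_trans (by gcongr) hk⟩

lemma exists_tail_index_eq_sSup {α : Type*} [ConditionallyCompleteLinearOrder α] {n : ℕ}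
    (A B : Fin n → α) (k : Fin n) :
    ∃ i : Fin n, (k : ℕ) ≤ (i : ℕ) ∧
      (sSup {x | ∃ i : Fin n, (k : ℕ) ≤ (i : ℕ) ∧ (x = A i ∨ x = B i)} = A i ∨
        sSup {x | ∃ i : Fin n, (k : ℕ) ≤ (i : ℕ) ∧ (x = A i ∨ x = B i)} = B i) := by
  set S := {x | ∃ i : Fin n, (k : ℕ) ≤ (i : ℕ) ∧ (x = A i ∨ x = B i)}
  have hS : S ⊆ Set.range A ∪ Set.range B := by
    rintro x ⟨i, -, rfl | rfl⟩
    exacts [.inl ⟨i, rfl⟩, .inr ⟨i, rfl⟩]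
  exact Set.Nonempty.csSup_mem (s := S) ⟨A k, k, le_rfl, .inl rfl⟩
    (((Set.finite_range A).union (Set.finite_range B)).subset hS)

theorem leader_node_table_pure_general (L R : BT)
    (H n : ℕ) (hH : H = height (BT.leader L R))
    (A_L A_R : Fin n → EReal)
    (hL : PureTableGuarantee L (height L) n A_L)
    (hR : PureTableGuarantee R (height R) n A_R) :
    PureTableGuarantee (BT.leader L R) H n (fun k =>
      sSup {x : EReal | ∃ i : Fin n, (k : ℕ) ≤ (i : ℕ) ∧ (x = A_L i ∨ x = A_R i)}) := by
  constructor
  · intro k hk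
    obtain ⟨i, hki, hi | hi⟩ := exists_tail_index_eq_sSup A_L A_R k
    · obtain ⟨πL, τL, hbr, hval, hlead⟩ := hL.1 i (by rwa [← hi])
      obtain ⟨π, τ, hbr', heu⟩ := exists_leader_of_left hbr R
      exact ⟨π, τ, hbr', heu ▸ hval.trans hi.symm,
        heu ▸ le_trans (by exact_mod_cast hki) hlead⟩
    · obtain ⟨πR, τR, hbr, hval, hlead⟩ := hR.1 i (by rwa [← hi])
      obtain ⟨π, τ, hbr', heu⟩ := exists_leader_of_right hbr L
      exact ⟨π, τ, hbr', heu ▸ hval.trans hi.symm,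
        heu ▸ le_trans (by exact_mod_cast hki) hlead⟩
  · have hHL : height L ≤ H := hH ▸ Nat.le_succ_of_le (le_max_left _ _)
    have hHR : height R ≤ H := hH ▸ Nat.le_succ_of_le (le_max_right _ _)
    intro k π τ hbr hlead
    rcases hbr.leader_cases with ⟨πL, τL, hbrL, heu⟩ | ⟨πR, τR, hbrR, heu⟩
    all_goals rw [heu] at hlead ⊢
    · exact ((hL.mono_height hHL).2 k πL τL hbrL hlead).trans (le_sSup ⟨k, le_rfl, .inl rfl⟩)
    · exact ((hR.mono_height hHR).2 k πR τR hbrR hlead).trans (le_sSup ⟨k, le_rfl, .inr rfl⟩)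

/-- **leader node, commitment to pure strategies.**  If `T` is a leader node
of height `H` with children `L`, `R` (of heights at most `H − 1`) whose tables `A_L`, `A_R`
satisfy the pure table guarantee with their respective heights, then the table
`A_T[k] := max { A_c[i] : i ≥ k, c ∈ {L,R} }` (with `max ∅ = −∞`) satisfies the pure table
guarantee for `T` with height `H`. -/
theorem leader_node_table_pure (L R : BT) (hvc : ValidChance (BT.leader L R))
    (H n : ℕ) (hH : H = height (BT.leader L R))
    (A_L A_R : Fin n → EReal)
    (hL : PureTableGuarantee L (height L) n A_L)
    (hR : PureTableGuarantee R (height R) n A_R) :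
    PureTableGuarantee (BT.leader L R) H n (fun k =>
      sSup {x : EReal | ∃ i : Fin n, (k : ℕ) ≤ (i : ℕ) ∧ (x = A_L i ∨ x = A_R i)}) :=
  leader_node_table_pure_general L R H n hH A_L A_R hL hR

end BT
end
end

section
/- For every finite two-player turn-based game tree (possibly with chance nodes) and every node s, the set of pairs (follower expected utility, leader expected utility) achievable by incentive-compatible correlated commitments in the subgame rooted at s is a convex subset of ℝ². -/
open scoped BigOperators Classical

noncomputable section

/-- A finite two-player turn-based game tree, with a constructor for chance nodes:
every internal node belongs to the leader (player 1), to the follower (player 2), or is a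
chance node equipped with a probability distribution over its children, and every leaf
carries real utilities `(u1, u2)` of the leader and the follower. -/
inductive TBT : Type
  | leaf (u1 u2 : ℝ) : TBT
  | leader (n : ℕ) (ch : Fin (n + 1) → TBT) : TBT
  | follower (n : ℕ) (ch : Fin (n + 1) → TBT) : TBT
  | chance (n : ℕ) (p : Fin (n + 1) → ℝ) (ch : Fin (n + 1) → TBT) : TBT

namespace TBT

/-- The game tree has no chance nodes. -/
def NoChance : TBT → Prop
  | .leaf _ _ => True
  | .leader _ ch => ∀ i, NoChance (ch i)
  | .follower _ ch => ∀ i, NoChance (ch i)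
  | .chance _ _ _ => False

/-- The chance probabilities form probability distributions. -/
def ValidChance : TBT → Prop
  | .leaf _ _ => True
  | .leader _ ch => ∀ i, ValidChance (ch i)
  | .follower _ ch => ∀ i, ValidChance (ch i)
  | .chance _ p ch => (∀ i, 0 ≤ p i) ∧ (∑ i, p i) = 1 ∧ ∀ i, ValidChance (ch i)

/-- Pure strategies of the leader: a choice of child at every leader node. -/
def LS : TBT → Type
  | .leaf _ _ => PUnit
  | .leader n ch => Fin (n + 1) × ((i : Fin (n + 1)) → LS (ch i))
  | .follower n ch => (i : Fin (n + 1)) → LS (ch i)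
  | .chance n _ ch => (i : Fin (n + 1)) → LS (ch i)

/-- Pure strategies of the follower: a choice of child at every follower node. -/
def FS : TBT → Type
  | .leaf _ _ => PUnit
  | .leader n ch => (i : Fin (n + 1)) → FS (ch i)
  | .follower n ch => Fin (n + 1) × ((i : Fin (n + 1)) → FS (ch i))
  | .chance n _ ch => (i : Fin (n + 1)) → FS (ch i)

instance fintypeLS : (t : TBT) → Fintype (LS t)
  | .leaf _ _ => inferInstanceAs (Fintype PUnit)
  | .leader n ch =>
    haveI : ∀ i, Fintype (LS (ch i)) := fun i => fintypeLS (ch i)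
    inferInstanceAs (Fintype (Fin (n + 1) × ((i : Fin (n + 1)) → LS (ch i))))
  | .follower n ch =>
    haveI : ∀ i, Fintype (LS (ch i)) := fun i => fintypeLS (ch i)
    inferInstanceAs (Fintype ((i : Fin (n + 1)) → LS (ch i)))
  | .chance n _ ch =>
    haveI : ∀ i, Fintype (LS (ch i)) := fun i => fintypeLS (ch i)
    inferInstanceAs (Fintype ((i : Fin (n + 1)) → LS (ch i)))

instance fintypeFS : (t : TBT) → Fintype (FS t)
  | .leaf _ _ => inferInstanceAs (Fintype PUnit)
  | .leader n ch =>
    haveI : ∀ i, Fintype (FS (ch i)) := fun i => fintypeFS (ch i)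
    inferInstanceAs (Fintype ((i : Fin (n + 1)) → FS (ch i)))
  | .follower n ch =>
    haveI : ∀ i, Fintype (FS (ch i)) := fun i => fintypeFS (ch i)
    inferInstanceAs (Fintype (Fin (n + 1) × ((i : Fin (n + 1)) → FS (ch i))))
  | .chance n _ ch =>
    haveI : ∀ i, Fintype (FS (ch i)) := fun i => fintypeFS (ch i)
    inferInstanceAs (Fintype ((i : Fin (n + 1)) → FS (ch i)))

/-- The expected utilities `(u1, u2)` obtained when the players follow a pure strategy
profile (the expectation is over the chance moves). -/
def playU : (t : TBT) → LS t → FS t → ℝ × ℝ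
  | .leaf u1 u2, _, _ => (u1, u2)
  | .leader _ ch, π1, π2 => playU (ch π1.1) (π1.2 π1.1) (π2 π1.1)
  | .follower _ ch, π1, π2 => playU (ch π2.1) (π1 π2.1) (π2.2 π2.1)
  | .chance _ p ch, π1, π2 => ∑ i, p i • playU (ch i) (π1 i) (π2 i)

/-- `φ` is a probability distribution on pure strategy profiles. -/
def IsDist (t : TBT) (φ : LS t → FS t → ℝ) : Prop :=
  (∀ π1 π2, 0 ≤ φ π1 π2) ∧ (∑ π1 : LS t, ∑ π2 : FS t, φ π1 π2) = 1

/-- Expected utilities `(u1, u2)` of a (correlated) distribution on pure strategy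
profiles. -/
def EU (t : TBT) (φ : LS t → FS t → ℝ) : ℝ × ℝ :=
  ∑ π1 : LS t, ∑ π2 : FS t, φ π1 π2 • playU t π1 π2

/-- Incentive compatibility of a correlated commitment, stated recursively for the
(unnormalized) conditional weight on pure strategy profiles of each subgame:  at every
follower node and for every recommendation `b` there — the action prescribed at that node
by the drawn follower strategy, conditioned on the play (i.e. the recommendations followed
so far, together with the leader's and chance's moves) having reached that node — the
follower cannot strictly increase his conditional expected utility, computed with respect
to the posterior on the leader's drawn strategy, by deviating to any action `b'` and
playing an arbitrary pure strategy `τ'` thereafter, the leader continuing to play her drawn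
strategy. -/
def IC : (t : TBT) → (LS t → FS t → ℝ) → Prop
  | .leaf _ _, _ => True
  | .leader n ch, φ => ∀ i : Fin (n + 1), IC (ch i) (fun σ τ =>
      ∑ π1 : LS (.leader n ch), ∑ π2 : FS (.leader n ch),
        if π1.1 = i ∧ π1.2 i = σ ∧ π2 i = τ then φ π1 π2 else 0)
  | .follower n ch, φ =>
      (∀ b b' : Fin (n + 1), ∀ τ' : FS (ch b'),
        (∑ π1 : LS (.follower n ch), ∑ π2 : FS (.follower n ch),
          if π2.1 = b then φ π1 π2 * (playU (ch b') (π1 b') τ').2 else 0) ≤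
        (∑ π1 : LS (.follower n ch), ∑ π2 : FS (.follower n ch),
          if π2.1 = b then φ π1 π2 * (playU (ch b) (π1 b) (π2.2 b)).2 else 0)) ∧
      ∀ b : Fin (n + 1), IC (ch b) (fun σ τ =>
        ∑ π1 : LS (.follower n ch), ∑ π2 : FS (.follower n ch),
          if π2.1 = b ∧ π1 b = σ ∧ π2.2 b = τ then φ π1 π2 else 0)
  | .chance n p ch, φ => ∀ i : Fin (n + 1), IC (ch i) (fun σ τ =>
      ∑ π1 : LS (.chance n p ch), ∑ π2 : FS (.chance n p ch),
        if π1 i = σ ∧ π2 i = τ then φ π1 π2 else 0)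

/-- The set of pairs (follower expected utility, leader expected utility) achievable by
incentive-compatible correlated commitments in the game `t`. -/
def AchievableSet (t : TBT) : Set (ℝ × ℝ) :=
  {p | ∃ φ : LS t → FS t → ℝ, IsDist t φ ∧ IC t φ ∧ p = ((EU t φ).2, (EU t φ).1)}

/-- The set of leader expected utilities of incentive-compatible correlated commitments;
its greatest element is the leader's SEFCE value. -/
def SEFCEvals (t : TBT) : Set ℝ :=
  {y | ∃ φ : LS t → FS t → ℝ, IsDist t φ ∧ IC t φ ∧ y = (EU t φ).1}

/-- The recursively defined sets `H_s` of utility pairs `(x, y)`, `x` the follower's and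
`y` the leader's utility: a single point at a leaf; at a leader node the convex hull of the
children's sets; at a follower node the convex hull of the union of the restricted sets
`Ĥ_w = H_w ∩ {(x,y) : x ≥ max_{w'≠w} min_{p'∈H_{w'}} p'.1}`; and at a chance node the
weighted Minkowski sum of the children's sets. -/
def Hset : TBT → Set (ℝ × ℝ)
  | .leaf u1 u2 => {(u2, u1)}
  | .leader _ ch => convexHull ℝ (⋃ i, Hset (ch i))
  | .follower _ ch => convexHull ℝ
      (⋃ i, {p ∈ Hset (ch i) | ∀ j, j ≠ i → sInf (Prod.fst '' Hset (ch j)) ≤ p.1})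
  | .chance n p ch =>
      {q | ∃ f : Fin (n + 1) → ℝ × ℝ, (∀ i, f i ∈ Hset (ch i)) ∧ q = ∑ i, p i • f i}

/-!
Every clause of `IC` is a linear inequality in the weight function `φ`: the weights passed to a
subgame are linear images of `φ`, and the follower's obedience constraints are stated for
unnormalized conditional weights, so no division by a reach probability occurs. Hence a convex
combination of incentive-compatible distributions is again one, and since `EU` is linear in `φ`
it realizes the corresponding convex combination of utility pairs.
-/

lemma sum_sum_ite_linear_combination {α β : Type*} [Fintype α] [Fintype β] (P : α → β → Prop)
    [∀ x y, Decidable (P x y)] (a b : ℝ) (f g : α → β → ℝ) :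
    (∑ x : α, ∑ y : β, if P x y then a * f x y + b * g x y else 0) =
      a * (∑ x : α, ∑ y : β, if P x y then f x y else 0) +
      b * (∑ x : α, ∑ y : β, if P x y then g x y else 0) := by
  simp only [Finset.mul_sum, mul_ite, mul_zero, ← Finset.sum_add_distrib, ite_add_ite, add_zero]

lemma IC.linear_combination :
    ∀ {t : TBT} {φ ψ : LS t → FS t → ℝ} {a b : ℝ}, 0 ≤ a → 0 ≤ b →
      IC t φ → IC t ψ → IC t (fun σ τ => a * φ σ τ + b * ψ σ τ)
  | .leaf _ _, _, _, _, _, _, _, _, _ => trivial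
  | .leader _ _, _, _, _, _, ha, hb, hφ, hψ => fun i => by
    simpa only [sum_sum_ite_linear_combination] using (hφ i).linear_combination ha hb (hψ i)
  | .follower _ _, _, _, _, _, ha, hb, hφ, hψ => by
    refine ⟨fun c c' τ' => ?_, fun c => ?_⟩
    · simp only [add_mul, mul_assoc, sum_sum_ite_linear_combination]
      exact add_le_add (mul_le_mul_of_nonneg_left (hφ.1 c c' τ') ha)
        (mul_le_mul_of_nonneg_left (hψ.1 c c' τ') hb)
    · simpa only [sum_sum_ite_linear_combination] using
        (hφ.2 c).linear_combination ha hb (hψ.2 c)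
  | .chance _ _ _, _, _, _, _, ha, hb, hφ, hψ => fun i => by
    simpa only [sum_sum_ite_linear_combination] using (hφ i).linear_combination ha hb (hψ i)

lemma IsDist.convex_combination {t : TBT} {φ ψ : LS t → FS t → ℝ} {a b : ℝ}
    (ha : 0 ≤ a) (hb : 0 ≤ b) (hab : a + b = 1) (hφ : IsDist t φ) (hψ : IsDist t ψ) :
    IsDist t (fun σ τ => a * φ σ τ + b * ψ σ τ) := by
  refine ⟨fun σ τ => add_nonneg (mul_nonneg ha (hφ.1 σ τ)) (mul_nonneg hb (hψ.1 σ τ)), ?_⟩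
  simp only [Finset.sum_add_distrib, ← Finset.mul_sum, hφ.2, hψ.2, mul_one, hab]

lemma EU_linear_combination (t : TBT) (a b : ℝ) (φ ψ : LS t → FS t → ℝ) :
    EU t (fun σ τ => a * φ σ τ + b * ψ σ τ) = a • EU t φ + b • EU t ψ := by
  simp only [EU, add_smul, mul_smul, Finset.sum_add_distrib, Finset.smul_sum]

theorem achievableSet_convex_general (t : TBT) :
    Convex ℝ (AchievableSet t) := by
  rintro _ ⟨φ, hφ, hφIC, rfl⟩ _ ⟨ψ, hψ, hψIC, rfl⟩ a b ha hb hab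
  refine ⟨fun σ τ => a * φ σ τ + b * ψ σ τ, hφ.convex_combination ha hb hab hψ,
    hφIC.linear_combination ha hb hψIC, ?_⟩
  simp [EU_linear_combination]

/-- For every finite two-player turn-based game tree (possibly with
chance nodes) and every node (here: the root of every subgame), the set of pairs
(follower expected utility, leader expected utility) achievable by incentive-compatible
correlated commitments in the subgame rooted at that node is a convex subset of `ℝ²`. -/
theorem achievableSet_convex (t : TBT) (hvc : ValidChance t) :
    Convex ℝ (AchievableSet t) :=
  achievableSet_convex_general t

end TBT
end
end
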